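/- arXiv:1506.03442 — 2 statements merged into one kernel-verified Lean document; each statement's English description precedes it below -/
import Mathlib

section
/- Let G = (V,E) be a finite simple graph and let S ⊆ V be a locating-dominating set of G. Then S is a locating-dominating set of the complement graph Ḡ if and only if there is no vertex u ∈ V∖S with S ⊆ N(u). -/
open SimpleGraph

/-- `S` is a dominating set of `G`: every vertex outside `S` has a neighbor in `S`. -/
def isDomSet {α : Type*} (G : SimpleGraph α) (S : Set α) : Prop :=
  ∀ v ∉ S, ∃ u ∈ S, G.Adj v u

/-- `S` is a locating-dominating set (LD-set) of `G`. -/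
def isLDSet {α : Type*} (G : SimpleGraph α) (S : Set α) : Prop :=
  isDomSet G S ∧ ∀ u ∉ S, ∀ v ∉ S, u ≠ v →
    G.neighborSet u ∩ S ≠ G.neighborSet v ∩ S

/-- The location-domination number `λ(G)`. -/
noncomputable def ldNum {α : Type*} (G : SimpleGraph α) : ℕ :=
  sInf {n | ∃ S : Set α, isLDSet G S ∧ S.ncard = n}

/-- The global location-domination number `λ_g(G)`. -/
noncomputable def gldNum {α : Type*} (G : SimpleGraph α) : ℕ :=
  sInf {n | ∃ S : Set α, isLDSet G S ∧ isLDSet Gᶜ S ∧ S.ncard = n}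

/-- `G` is bipartite with stable sets `U` and `W`. -/
def bipartiteWith {α : Type*} (G : SimpleGraph α) (U W : Set α) : Prop :=
  U ∪ W = Set.univ ∧ Disjoint U W ∧
    ∀ ⦃u v : α⦄, G.Adj u v → (u ∈ U ∧ v ∈ W) ∨ (u ∈ W ∧ v ∈ U)

/-! For `v ∉ S`, the trace `N(v) ∩ S` taken in `Gᶜ` is the complement in `S` of the trace taken
in `G`. Hence two vertices outside `S` are separated by `S` in `Gᶜ` exactly when they are in `G`,
and `v` is undominated in `Gᶜ` exactly when its trace in `G` is all of `S`. -/

section Complement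

variable {V : Type*} (G : SimpleGraph V) {S : Set V}

theorem compl_neighborSet_inter_eq_diff {v : V} (hv : v ∉ S) :
    Gᶜ.neighborSet v ∩ S = S \ G.neighborSet v := by
  ext w
  simp only [Set.mem_inter_iff, Set.mem_sdiff, mem_neighborSet, compl_adj]
  exact ⟨fun ⟨⟨_, hn⟩, hw⟩ => ⟨hw, hn⟩,
    fun ⟨hw, hn⟩ => ⟨⟨fun h => hv (h ▸ hw), hn⟩, hw⟩⟩

theorem isDomSet_compl_iff : isDomSet Gᶜ S ↔ ¬ ∃ u ∉ S, S ⊆ G.neighborSet u := by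
  push Not
  refine forall₂_congr fun v hv => ?_
  rw [← Set.sdiff_nonempty, ← compl_neighborSet_inter_eq_diff G hv]
  exact ⟨fun ⟨u, huS, hadj⟩ => ⟨u, hadj, huS⟩, fun ⟨u, hadj, huS⟩ => ⟨u, huS, hadj⟩⟩

theorem compl_neighborSet_inter_eq_iff {u v : V} (hu : u ∉ S) (hv : v ∉ S) :
    Gᶜ.neighborSet u ∩ S = Gᶜ.neighborSet v ∩ S ↔
      G.neighborSet u ∩ S = G.neighborSet v ∩ S := by
  rw [compl_neighborSet_inter_eq_diff G hu, compl_neighborSet_inter_eq_diff G hv,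
    Set.inter_comm _ S, Set.inter_comm _ S]
  -- `S ∩ A = S \ (S \ A)`, so the traces on `S` determine each other.
  refine ⟨fun h => ?_, fun h => ?_⟩
  · rw [← Set.sdiff_sdiff_right_self, h, Set.sdiff_sdiff_right_self]
  · rw [Set.sdiff_self_inter.symm, h, Set.sdiff_self_inter]

end Complement

theorem stmt2_general {V : Type*} (G : SimpleGraph V) (S : Set V)
    (hS : isLDSet G S) :
    isLDSet Gᶜ S ↔ ¬ ∃ u ∉ S, S ⊆ G.neighborSet u := by
  rw [← isDomSet_compl_iff]
  refine ⟨And.left, fun hdom => ⟨hdom, fun u hu v hv huv => ?_⟩⟩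
  rw [Ne, compl_neighborSet_inter_eq_iff G hu hv]
  exact hS.2 u hu v hv huv

theorem stmt2 {V : Type*} [Fintype V] (G : SimpleGraph V) (S : Set V)
    (hS : isLDSet G S) :
    isLDSet Gᶜ S ↔ ¬ ∃ u ∉ S, S ⊆ G.neighborSet u :=
  stmt2_general G S hS
end

section
/- Let G be a finite simple graph. Then λ_g(G) = λ(G) + 1 if and only if no LD-code of G is a global LD-set (i.e., every LD-set of G of cardinality λ(G) fails to be an LD-set of Ḡ). -/
open SimpleGraph

/-!
Outside an LD-set `S` of `G`, the trace of a vertex on `S` in `Ḡ` is the complement in `S` of its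
trace in `G`, so `S` still separates the vertices outside it in `Ḡ`. Domination in `Ḡ` can fail only
at a vertex whose `G`-trace is all of `S`, and since traces are distinct there is at most one such
vertex; adding it to `S` gives a global LD-set. Hence `λ(G) ≤ λ_g(G) ≤ λ(G) + 1`, and
`λ_g(G) = λ(G)` exactly when some LD-code is global.
-/

section

variable {α : Type*} {G : SimpleGraph α} {S T : Set α}

lemma isLDSet_univ (G : SimpleGraph α) : isLDSet G Set.univ :=
  ⟨fun v hv => absurd (Set.mem_univ v) hv, fun u hu => absurd (Set.mem_univ u) hu⟩

lemma isLDSet.mono (h : isLDSet G S) (hST : S ⊆ T) : isLDSet G T := by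
  refine ⟨fun v hv => ?_, fun u hu v hv huv heq => ?_⟩
  · obtain ⟨u, hu, hadj⟩ := h.1 v fun hvS => hv (hST hvS)
    exact ⟨u, hST hu, hadj⟩
  · apply h.2 u (fun h' => hu (hST h')) v (fun h' => hv (hST h')) huv
    simpa only [Set.inter_assoc, Set.inter_eq_right.mpr hST] using congrArg (· ∩ S) heq

lemma compl_neighborSet_inter_of_notMem {u : α} (hu : u ∉ S) :
    Gᶜ.neighborSet u ∩ S = S \ G.neighborSet u := by
  ext w
  simp only [Set.mem_inter_iff, mem_neighborSet, compl_adj, Set.mem_sdiff]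
  exact ⟨fun ⟨⟨_, hn⟩, hw⟩ => ⟨hw, hn⟩, fun ⟨hw, hn⟩ => ⟨⟨fun huw => hu (huw ▸ hw), hn⟩, hw⟩⟩

lemma isLDSet.compl (h : isLDSet G S) (hS : ∀ v ∉ S, ¬ S ⊆ G.neighborSet v) :
    isLDSet Gᶜ S := by
  refine ⟨fun v hv => ?_, fun u hu v hv huv heq => ?_⟩
  · obtain ⟨u, hu, hn⟩ := Set.not_subset.mp (hS v hv)
    exact ⟨u, hu, fun hvu => hv (hvu ▸ hu), hn⟩
  · apply h.2 u hu v hv huv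
    rw [compl_neighborSet_inter_of_notMem hu, compl_neighborSet_inter_of_notMem hv] at heq
    rw [Set.inter_comm, ← Set.sdiff_sdiff_right_self, heq, Set.sdiff_sdiff_right_self,
      Set.inter_comm]

lemma isLDSet.exists_isLDSet_compl (h : isLDSet G S) :
    ∃ T, isLDSet G T ∧ isLDSet Gᶜ T ∧ T.ncard ≤ S.ncard + 1 := by
  by_cases hx : ∃ x ∉ S, S ⊆ G.neighborSet x
  · obtain ⟨x, hxS, hx⟩ := hx
    have hT : isLDSet G (insert x S) := h.mono (Set.subset_insert x S)
    refine ⟨insert x S, hT, hT.compl fun v hv hvT => ?_, Set.ncard_insert_le x S⟩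
    -- `v` and `x` would both have trace `S`
    have hvS : v ∉ S := fun h' => hv (Set.mem_insert_of_mem x h')
    have hvx : v ≠ x := fun h' => hv (h' ▸ Set.mem_insert x S)
    exact h.2 v hvS x hxS hvx <| by
      rw [Set.inter_eq_right.mpr (hvT.trans' (Set.subset_insert x S)), Set.inter_eq_right.mpr hx]
  · push Not at hx
    exact ⟨S, h, h.compl hx, Nat.le_succ _⟩

lemma exists_isLDSet_ncard_eq_ldNum (G : SimpleGraph α) :
    ∃ S, isLDSet G S ∧ S.ncard = ldNum G :=
  Nat.sInf_mem (s := {n | ∃ S, isLDSet G S ∧ S.ncard = n}) ⟨_, Set.univ, isLDSet_univ G, rfl⟩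

lemma exists_isLDSet_compl_ncard_eq_gldNum (G : SimpleGraph α) :
    ∃ S, isLDSet G S ∧ isLDSet Gᶜ S ∧ S.ncard = gldNum G :=
  Nat.sInf_mem (s := {n | ∃ S, isLDSet G S ∧ isLDSet Gᶜ S ∧ S.ncard = n})
    ⟨_, Set.univ, isLDSet_univ G, isLDSet_univ Gᶜ, rfl⟩

lemma ldNum_le_ncard (h : isLDSet G S) : ldNum G ≤ S.ncard :=
  Nat.sInf_le ⟨S, h, rfl⟩

lemma gldNum_le_ncard (h : isLDSet G S) (hc : isLDSet Gᶜ S) : gldNum G ≤ S.ncard :=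
  Nat.sInf_le ⟨S, h, hc, rfl⟩

lemma ldNum_le_gldNum (G : SimpleGraph α) : ldNum G ≤ gldNum G := by
  obtain ⟨S, hS, -, hcard⟩ := exists_isLDSet_compl_ncard_eq_gldNum G
  exact hcard ▸ ldNum_le_ncard hS

lemma gldNum_le_ldNum_add_one (G : SimpleGraph α) : gldNum G ≤ ldNum G + 1 := by
  obtain ⟨S, hS, hcard⟩ := exists_isLDSet_ncard_eq_ldNum G
  obtain ⟨T, hT, hTc, hTcard⟩ := hS.exists_isLDSet_compl
  exact (gldNum_le_ncard hT hTc).trans (hcard ▸ hTcard)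

lemma gldNum_eq_ldNum_iff :
    gldNum G = ldNum G ↔ ∃ S, isLDSet G S ∧ S.ncard = ldNum G ∧ isLDSet Gᶜ S := by
  constructor
  · intro heq
    obtain ⟨S, hS, hSc, hcard⟩ := exists_isLDSet_compl_ncard_eq_gldNum G
    exact ⟨S, hS, hcard.trans heq, hSc⟩
  · rintro ⟨S, hS, hcard, hSc⟩
    exact le_antisymm (hcard ▸ gldNum_le_ncard hS hSc) (ldNum_le_gldNum G)

end

theorem stmt7_general {V : Type*} (G : SimpleGraph V) :
    gldNum G = ldNum G + 1 ↔
      ∀ S : Set V, isLDSet G S → S.ncard = ldNum G → ¬ isLDSet Gᶜ S := by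
  have hbounds : gldNum G = ldNum G + 1 ↔ ¬ gldNum G = ldNum G := by
    have := ldNum_le_gldNum G
    have := gldNum_le_ldNum_add_one G
    omega
  simp only [hbounds, gldNum_eq_ldNum_iff, not_exists, not_and]

theorem stmt7 {V : Type*} [Fintype V] (G : SimpleGraph V) :
    gldNum G = ldNum G + 1 ↔
      ∀ S : Set V, isLDSet G S → S.ncard = ldNum G → ¬ isLDSet Gᶜ S :=
  stmt7_general G
end
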